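/- arXiv:2005.13834 — 2 statements merged into one kernel-verified Lean document; each statement's English description precedes it below -/
import Mathlib

section
/- Let P be a noncommutative polynomial in d variables and their adjoints, let z = (z₁,…,z_d) be elements of a C*-algebra 𝒜, and let δ_i be the noncommutative derivative satisfying Leibniz's rule with δ_i Y_j = 1_{i=j} Y_i ⊗ 1 and δ_i Y_j* = −1_{i=j} 1 ⊗ Y_i*. Then (δ_i e^P)(z,z*) = ∫₀¹ (e^{αP} · δ_iP · e^{(1−α)P})(z,z*) dα, where the product uses the convention A·(B⊗C)·D = (AB)⊗(CD), and δ_i e^P is defined by the convergent series ∑_{k≥0} (1/k!) δ_i(P^k). -/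
/-!
Expanding both exponentials, the integrand is the double series
`∑_{p,q} α^p (1-α)^q / (p! q!) · B(A^p, A^q)`, where `A = P(z,z*)` and `B(E₁, E₂)` evaluates
`δ_i P` sandwiched between `E₁` and `E₂`. Dominated convergence (with the bound
`‖B‖ ‖A^p‖ ‖A^q‖ / (p! q!)`) and the Beta integral `∫₀¹ α^p (1-α)^q dα = p! q! / (p+q+1)!` turn
the right-hand side into `∑_n 1/(n+1)! ∑_{p+q=n} B(A^p, A^q)`. On the other side, Leibniz's rule
gives `δ_i(P^{n+1}) = ∑_{p+q=n} (P^p ⊗ 1) · δ_i P · (1 ⊗ P^q)`, whose evaluation is the same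
inner sum.
-/

open scoped TensorProduct

section

variable {d : ℕ} {𝒜 T : Type*}
  [NormedRing 𝒜] [StarRing 𝒜] [CStarRing 𝒜] [NormedAlgebra ℂ 𝒜] [StarModule ℂ 𝒜]
  [CompleteSpace 𝒜]
  [NormedRing T] [StarRing T] [CStarRing T] [NormedAlgebra ℂ T] [StarModule ℂ T]
  [CompleteSpace T]

/-- The free algebra `ℂ⟨Y₁,…,Y_d,Y₁*,…,Y_d*⟩`, with `Sum.inl j ↦ Y_j` and
`Sum.inr j ↦ Y_j*`. -/
abbrev NCPoly (d : ℕ) := FreeAlgebra ℂ (Fin d ⊕ Fin d)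

/-- Evaluation `P ↦ P(z, z*)` at a tuple `z` of elements of a C*-algebra. -/
noncomputable def evMap (z : Fin d → 𝒜) : NCPoly d →ₐ[ℂ] 𝒜 :=
  FreeAlgebra.lift ℂ (Sum.elim z fun j => star (z j))

/-- Evaluation `A ⊗ B ↦ A(z,z*) ⊗ B(z,z*) ∈ 𝒜 ⊗_min 𝒜` of tensors of polynomials, the
minimal tensor product `𝒜 ⊗_min 𝒜` being realized as a C*-algebra `T` together with a bilinear
map `m : 𝒜 × 𝒜 → T` playing the role of `a ⊗ b`. -/
noncomputable def Ev2 (z : Fin d → 𝒜) (m : 𝒜 →ₗ[ℂ] 𝒜 →ₗ[ℂ] T) :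
    (NCPoly d ⊗[ℂ] NCPoly d) →ₗ[ℂ] T :=
  TensorProduct.lift ((m ∘ₗ (evMap z).toLinearMap).compl₂ (evMap z).toLinearMap)

/-- Evaluation of a tensor of polynomials sandwiched between `E₁` (on the left of the first
leg) and `E₂` (on the right of the second leg), realizing
`U ⊗ V ↦ (E₁ · U(z,z*)) ⊗ (V(z,z*) · E₂)`, i.e. the convention `A·(B⊗C)·D = (AB)⊗(CD)`. -/
noncomputable def sandwich (z : Fin d → 𝒜) (m : 𝒜 →ₗ[ℂ] 𝒜 →ₗ[ℂ] T) (E₁ E₂ : 𝒜) :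
    (NCPoly d ⊗[ℂ] NCPoly d) →ₗ[ℂ] T :=
  TensorProduct.lift
    ((m ∘ₗ (LinearMap.mulLeft ℂ E₁ ∘ₗ (evMap z).toLinearMap)).compl₂
      (LinearMap.mulRight ℂ E₂ ∘ₗ (evMap z).toLinearMap))

open Finset Nat

theorem HasSum.sum_antidiagonal {E : Type*} [AddCommMonoid E] [TopologicalSpace E]
    [ContinuousAdd E] [RegularSpace E] {f : ℕ × ℕ → E} {a : E} (h : HasSum f a) :
    HasSum (fun n => ∑ pq ∈ antidiagonal n, f pq) a :=
  ((HasAntidiagonal.sigmaAntidiagonalEquivProd.hasSum_iff).mpr h).sigma fun n =>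
    (antidiagonal n).hasSum fun pq => f pq

theorem ContinuousLinearMap.hasSum_apply₂_of_summable_norm {𝕜 E F G ι κ : Type*}
    [NontriviallyNormedField 𝕜] [NormedAddCommGroup E] [NormedSpace 𝕜 E] [CompleteSpace E]
    [NormedAddCommGroup F] [NormedSpace 𝕜 F] [CompleteSpace F]
    [NormedAddCommGroup G] [NormedSpace 𝕜 G] [CompleteSpace G]
    (B : E →L[𝕜] F →L[𝕜] G) {f : ι → E} {g : κ → F}
    (hf : Summable fun i => ‖f i‖) (hg : Summable fun j => ‖g j‖) :
    HasSum (fun ij : ι × κ => B (f ij.1) (g ij.2)) (B (∑' i, f i) (∑' j, g j)) := by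
  have hsum : Summable fun ij : ι × κ => B (f ij.1) (g ij.2) := by
    refine .of_norm_bounded (((hf.mul_of_nonneg hg (fun _ => norm_nonneg _)
      fun _ => norm_nonneg _).mul_left ‖B‖)) fun ij => ?_
    simpa only [mul_assoc] using B.le_opNorm₂ (f ij.1) (g ij.2)
  have hrow : ∀ i, HasSum (fun j => B (f i) (g j)) (B (f i) (∑' j, g j)) := fun i =>
    (B (f i)).hasSum hg.of_norm.hasSum
  have hcol : HasSum (fun i => B (f i) (∑' j, g j)) (B (∑' i, f i) (∑' j, g j)) :=
    (B.flip (∑' j, g j)).hasSum hf.of_norm.hasSum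
  rw [hcol.unique (hsum.hasSum.prod_fiberwise hrow)]
  exact hsum.hasSum

theorem integral_pow_mul_one_sub_pow (p q : ℕ) :
    ∫ α in (0 : ℝ)..1, (α : ℂ) ^ p * (1 - (α : ℂ)) ^ q = p ! * q ! / (p + q + 1)! := by
  have hβ := Complex.betaIntegral_eq_Gamma_mul_div (p + 1) (q + 1)
    (by simp only [Complex.add_re, Complex.natCast_re, Complex.one_re]; positivity)
    (by simp only [Complex.add_re, Complex.natCast_re, Complex.one_re]; positivity)
  have hpq : (p + 1 + (q + 1) : ℂ) = ((p + q + 1 : ℕ) : ℂ) + 1 := by push_cast; ring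
  simp only [Complex.betaIntegral, add_sub_cancel_right, Complex.cpow_natCast, hpq,
    Complex.Gamma_nat_eq_factorial] at hβ
  exact hβ

theorem map_pow_succ_of_leibniz {K R : Type*} [CommSemiring K] [Semiring R] [Algebra K R]
    (δ : R → R ⊗[K] R) (hδ : ∀ P Q, δ (P * Q) = δ P * (1 ⊗ₜ Q) + (P ⊗ₜ 1) * δ Q)
    (P : R) (n : ℕ) :
    δ (P ^ (n + 1)) =
      ∑ pq ∈ antidiagonal n, ((P ^ pq.1) ⊗ₜ[K] (1 : R)) * δ P * ((1 : R) ⊗ₜ[K] P ^ pq.2) := by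
  induction n with
  | zero => simp [← Algebra.TensorProduct.one_def]
  | succ n ih =>
    rw [pow_succ, hδ, ih, Nat.sum_antidiagonal_succ', add_comm, sum_mul]
    simp [mul_assoc, pow_succ, Algebra.TensorProduct.tmul_mul_tmul]

theorem map_one_of_leibniz {K R : Type*} [CommSemiring K] [Ring R] [Algebra K R]
    (δ : R → R ⊗[K] R) (hδ : ∀ P Q, δ (P * Q) = δ P * (1 ⊗ₜ Q) + (P ⊗ₜ 1) * δ Q) :
    δ 1 = 0 := by
  simpa [← Algebra.TensorProduct.one_def] using hδ 1 1

theorem integral_pow_div_factorial_mul_one_sub_pow_div_factorial (p q : ℕ) :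
    ∫ α in (0 : ℝ)..1, (α : ℂ) ^ p / p ! * ((1 - (α : ℂ)) ^ q / q !) = ((p + q + 1)! : ℂ)⁻¹ := by
  simp_rw [_root_.div_mul_div_comm, intervalIntegral.integral_div, integral_pow_mul_one_sub_pow]
  rw [div_div_cancel_left' (by simp [Nat.factorial_ne_zero])]

section

variable {𝔸 E : Type*} [NormedRing 𝔸] [NormedAlgebra ℂ 𝔸]
  [NormedAddCommGroup E] [NormedSpace ℂ E] (B : 𝔸 →L[ℂ] 𝔸 →L[ℂ] E) (x : 𝔸)

theorem ContinuousLinearMap.apply₂_expSeries_terms (α β : ℂ) (p q : ℕ) :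
    B ((p ! : ℂ)⁻¹ • (α • x) ^ p) ((q ! : ℂ)⁻¹ • (β • x) ^ q) =
      (α ^ p / p ! * (β ^ q / q !)) • B (x ^ p) (x ^ q) := by
  simp only [smul_pow, smul_smul, map_smul, FunLike.coe_smul, Pi.smul_apply]
  ring_nf

theorem ContinuousLinearMap.norm_apply₂_expSeries_terms_le {α β : ℂ} (hα : ‖α‖ ≤ 1)
    (hβ : ‖β‖ ≤ 1) (p q : ℕ) :
    ‖(α ^ p / p ! * (β ^ q / q !)) • B (x ^ p) (x ^ q)‖ ≤
      ‖B‖ * (‖(p ! : ℂ)⁻¹ • x ^ p‖ * ‖(q ! : ℂ)⁻¹ • x ^ q‖) := by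
  have hterm_le : ∀ c : ℂ, ‖c‖ ≤ 1 → ∀ n, ‖(n ! : ℂ)⁻¹ • (c • x) ^ n‖ ≤ ‖(n ! : ℂ)⁻¹ • x ^ n‖ := by
    intro c hc n
    rw [smul_pow, smul_comm, norm_smul, norm_pow]
    exact mul_le_of_le_one_left (norm_nonneg _) (pow_le_one₀ (norm_nonneg _) hc)
  rw [← B.apply₂_expSeries_terms, ← mul_assoc]
  refine (B.le_opNorm₂ _ _).trans ?_
  gcongr
  exacts [hterm_le α hα p, hterm_le β hβ q]

variable [CompleteSpace 𝔸] [CompleteSpace E]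

theorem ContinuousLinearMap.hasSum_apply₂_exp_smul (α β : ℂ) :
    HasSum (fun pq : ℕ × ℕ => (α ^ pq.1 / pq.1 ! * (β ^ pq.2 / pq.2 !)) • B (x ^ pq.1) (x ^ pq.2))
      (B (NormedSpace.exp (α • x)) (NormedSpace.exp (β • x))) := by
  have h := B.hasSum_apply₂_of_summable_norm
    (NormedSpace.norm_expSeries_summable' (𝕂 := ℂ) (α • x))
    (NormedSpace.norm_expSeries_summable' (𝕂 := ℂ) (β • x))
  rw [(NormedSpace.exp_series_hasSum_exp' _).tsum_eq,
    (NormedSpace.exp_series_hasSum_exp' _).tsum_eq] at h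
  exact h.congr_fun fun pq => (B.apply₂_expSeries_terms x α β pq.1 pq.2).symm

theorem ContinuousLinearMap.hasSum_duhamel :
    HasSum (fun n => ((n + 1)! : ℂ)⁻¹ • ∑ pq ∈ antidiagonal n, B (x ^ pq.1) (x ^ pq.2))
      (∫ α in (0 : ℝ)..1,
        B (NormedSpace.exp ((α : ℂ) • x)) (NormedSpace.exp ((1 - (α : ℂ)) • x))) := by
  set F : ℕ × ℕ → ℝ → E := fun pq α =>
    ((α : ℂ) ^ pq.1 / pq.1 ! * ((1 - (α : ℂ)) ^ pq.2 / pq.2 !)) • B (x ^ pq.1) (x ^ pq.2)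
  have hnorm : ∀ t ∈ Set.Icc (0 : ℝ) 1, ‖(t : ℂ)‖ ≤ 1 := fun t ht => by
    rw [Complex.norm_real, Real.norm_of_nonneg ht.1]
    exact ht.2
  have hbound : ∀ pq, ∀ α ∈ Set.uIoc (0 : ℝ) 1,
      ‖F pq α‖ ≤ ‖B‖ * (‖(pq.1 ! : ℂ)⁻¹ • x ^ pq.1‖ * ‖(pq.2 ! : ℂ)⁻¹ • x ^ pq.2‖) := by
    intro pq α hα
    rw [Set.uIoc_of_le zero_le_one] at hα
    have h₂ : ‖1 - (α : ℂ)‖ ≤ 1 := by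
      simpa using hnorm (1 - α) ⟨by linarith [hα.2], by linarith [hα.1]⟩
    exact B.norm_apply₂_expSeries_terms_le x (hnorm α (Set.Ioc_subset_Icc_self hα)) h₂ _ _
  have hsum : HasSum (fun pq => ∫ α in (0 : ℝ)..1, F pq α) (∫ α in (0 : ℝ)..1,
      B (NormedSpace.exp ((α : ℂ) • x)) (NormedSpace.exp ((1 - (α : ℂ)) • x))) :=
    intervalIntegral.hasSum_integral_of_dominated_convergence _
      (fun pq => (by fun_prop : Continuous (F pq)).aestronglyMeasurable)
      (fun pq => Filter.Eventually.of_forall (hbound pq))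
      (Filter.Eventually.of_forall fun _ _ =>
        ((NormedSpace.norm_expSeries_summable' x).mul_of_nonneg
          (NormedSpace.norm_expSeries_summable' x) (fun _ => norm_nonneg _)
          fun _ => norm_nonneg _).mul_left ‖B‖)
      intervalIntegrable_const
      (Filter.Eventually.of_forall fun α _ => B.hasSum_apply₂_exp_smul x _ _)
  simp_rw [F, intervalIntegral.integral_smul_const,
    integral_pow_div_factorial_mul_one_sub_pow_div_factorial] at hsum
  refine hsum.sum_antidiagonal.congr_fun fun n => ?_
  rw [smul_sum]
  exact sum_congr rfl fun pq hpq => by rw [mem_antidiagonal.mp hpq]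
end

section

variable {d : ℕ} {𝒜 T : Type*} [NormedRing 𝒜] [StarRing 𝒜] [NormedAlgebra ℂ 𝒜]
  [NormedRing T] [NormedAlgebra ℂ T] (z : Fin d → 𝒜) (m : 𝒜 →ₗ[ℂ] 𝒜 →ₗ[ℂ] T)

theorem sandwich_tmul (E₁ E₂ : 𝒜) (a b : NCPoly d) :
    sandwich z m E₁ E₂ (a ⊗ₜ b) = m (E₁ * evMap z a) (evMap z b * E₂) := rfl

theorem Ev2_eq_sandwich_one_one : Ev2 z m = sandwich z m 1 1 :=
  TensorProduct.ext' fun a b => by simp [Ev2, sandwich_tmul]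

theorem sandwich_tmul_one_mul_mul_one_tmul (E₁ E₂ : 𝒜) (Q Q' : NCPoly d)
    (u : NCPoly d ⊗[ℂ] NCPoly d) :
    sandwich z m E₁ E₂ ((Q ⊗ₜ (1 : NCPoly d)) * u * ((1 : NCPoly d) ⊗ₜ Q')) =
      sandwich z m (E₁ * evMap z Q) (evMap z Q' * E₂) u := by
  induction u using TensorProduct.induction_on with
  | zero => simp
  | tmul a b => simp [Algebra.TensorProduct.tmul_mul_tmul, sandwich_tmul, mul_assoc]
  | add u v hu hv => simp [mul_add, add_mul, hu, hv]

noncomputable def sandwichₗ (u : NCPoly d ⊗[ℂ] NCPoly d) : 𝒜 →ₗ[ℂ] 𝒜 →ₗ[ℂ] T :=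
  LinearMap.mk₂ ℂ (fun E₁ E₂ => sandwich z m E₁ E₂ u)
    (fun _ _ _ => by
      induction u using TensorProduct.induction_on <;> simp_all [sandwich_tmul, add_mul]; abel)
    (fun _ _ _ => by induction u using TensorProduct.induction_on <;> simp_all [sandwich_tmul])
    (fun _ _ _ => by
      induction u using TensorProduct.induction_on <;> simp_all [sandwich_tmul, mul_add]; abel)
    (fun _ _ _ => by induction u using TensorProduct.induction_on <;> simp_all [sandwich_tmul])

theorem exists_norm_sandwich_le (hm_norm : ∀ a b : 𝒜, ‖m a b‖ ≤ ‖a‖ * ‖b‖)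
    (u : NCPoly d ⊗[ℂ] NCPoly d) :
    ∃ C, ∀ E₁ E₂ : 𝒜, ‖sandwich z m E₁ E₂ u‖ ≤ C * ‖E₁‖ * ‖E₂‖ := by
  induction u using TensorProduct.induction_on with
  | zero => exact ⟨0, by simp⟩
  | tmul a b =>
    refine ⟨‖evMap z a‖ * ‖evMap z b‖, fun E₁ E₂ => ?_⟩
    calc ‖sandwich z m E₁ E₂ (a ⊗ₜ b)‖ ≤ ‖E₁ * evMap z a‖ * ‖evMap z b * E₂‖ := hm_norm _ _
      _ ≤ ‖E₁‖ * ‖evMap z a‖ * (‖evMap z b‖ * ‖E₂‖) := by gcongr <;> exact norm_mul_le _ _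
      _ = ‖evMap z a‖ * ‖evMap z b‖ * ‖E₁‖ * ‖E₂‖ := by ring
  | add u v hu hv =>
    obtain ⟨C₁, hC₁⟩ := hu
    obtain ⟨C₂, hC₂⟩ := hv
    refine ⟨C₁ + C₂, fun E₁ E₂ => ?_⟩
    rw [map_add, add_mul, add_mul]
    exact (norm_add_le _ _).trans (add_le_add (hC₁ E₁ E₂) (hC₂ E₁ E₂))

end

theorem stmt_3_general (z : Fin d → 𝒜) (m : 𝒜 →ₗ[ℂ] 𝒜 →ₗ[ℂ] T)
    (hm_norm : ∀ a b : 𝒜, ‖m a b‖ ≤ ‖a‖ * ‖b‖)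
    (D : Fin d → (NCPoly d →ₗ[ℂ] NCPoly d ⊗[ℂ] NCPoly d))
    (hLeib : ∀ (i : Fin d) (P Q : NCPoly d),
      D i (P * Q) = D i P * ((1 : NCPoly d) ⊗ₜ[ℂ] Q) + (P ⊗ₜ[ℂ] (1 : NCPoly d)) * D i Q)
    (P : NCPoly d) (i : Fin d) :
    (∑' k : ℕ, ((k.factorial : ℂ))⁻¹ • Ev2 z m (D i (P ^ k)))
      = ∫ α in (0:ℝ)..1,
          sandwich z m (NormedSpace.exp ((α : ℂ) • evMap z P))
            (NormedSpace.exp ((1 - (α : ℂ)) • evMap z P)) (D i P) := by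
  obtain ⟨C, hC⟩ := exists_norm_sandwich_le z m hm_norm (D i P)
  set B := (sandwichₗ z m (D i P)).mkContinuous₂ C hC
  have hB : ∀ E₁ E₂, B E₁ E₂ = sandwich z m E₁ E₂ (D i P) := fun _ _ => rfl
  have hterm : ∀ n, Ev2 z m (D i (P ^ (n + 1))) =
      ∑ pq ∈ antidiagonal n, B (evMap z P ^ pq.1) (evMap z P ^ pq.2) := fun n => by
    rw [Ev2_eq_sandwich_one_one, map_pow_succ_of_leibniz (D i) (hLeib i), map_sum]
    simp [hB, sandwich_tmul_one_mul_mul_one_tmul]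
  have h0 : Ev2 z m (D i 1) = 0 := by rw [map_one_of_leibniz (D i) (hLeib i), map_zero]
  refine ((hasSum_nat_add_iff' 1).mp ?_).tsum_eq
  simpa [h0, hterm, hB] using B.hasSum_duhamel (evMap z P)

/-- Duhamel formula for the noncommutative derivative of the exponential:
`(δ_i e^P)(z,z*) = ∫₀¹ (e^{αP} δ_iP e^{(1−α)P})(z,z*) dα`, where
`(δ_i e^P)(z,z*) = ∑_k (1/k!)(δ_i P^k)(z,z*)`. -/
theorem stmt_3 (z : Fin d → 𝒜) (m : 𝒜 →ₗ[ℂ] 𝒜 →ₗ[ℂ] T)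
    (hm_mul : ∀ a b c e : 𝒜, m a b * m c e = m (a * c) (b * e))
    (hm_one : m 1 1 = 1)
    (hm_norm : ∀ a b : 𝒜, ‖m a b‖ ≤ ‖a‖ * ‖b‖)
    (D : Fin d → (NCPoly d →ₗ[ℂ] NCPoly d ⊗[ℂ] NCPoly d))
    (hLeib : ∀ (i : Fin d) (P Q : NCPoly d),
      D i (P * Q) = D i P * ((1 : NCPoly d) ⊗ₜ[ℂ] Q) + (P ⊗ₜ[ℂ] (1 : NCPoly d)) * D i Q)
    (hGen1 : ∀ i j : Fin d, D i (FreeAlgebra.ι ℂ (Sum.inl j))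
      = if i = j then FreeAlgebra.ι ℂ (Sum.inl i : Fin d ⊕ Fin d) ⊗ₜ[ℂ] (1 : NCPoly d) else 0)
    (hGen2 : ∀ i j : Fin d, D i (FreeAlgebra.ι ℂ (Sum.inr j))
      = if i = j then -((1 : NCPoly d) ⊗ₜ[ℂ] FreeAlgebra.ι ℂ (Sum.inr i : Fin d ⊕ Fin d))
        else 0)
    (P : NCPoly d) (i : Fin d) :
    (∑' k : ℕ, ((k.factorial : ℂ))⁻¹ • Ev2 z m (D i (P ^ k)))
      = ∫ α in (0:ℝ)..1,
          sandwich z m (NormedSpace.exp ((α : ℂ) • evMap z P))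
            (NormedSpace.exp ((1 - (α : ℂ)) • evMap z P)) (D i P) :=
  stmt_3_general z m hm_norm D hLeib P i

end
end

section
/- Let g : [0,2π] → (0,∞) be a continuous probability-type density with ∫₀^{2π} g = 2π, let G(s) = ∫₀^s g(u)du, and let x be a self-adjoint operator with distribution the uniform measure on [0,2π]. Then the unitaries u_t = e^{iG^{−1}(x)} and u = e^{ix} satisfy ‖u_t − u‖ ≤ 2π · sup_{s∈[0,2π]} |1 − g(s)|. -/
/-!
Since `x` has real spectrum, the spectral bound reduces `‖e^{iG⁻¹(x)} − e^{ix}‖` to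
`sup_s |e^{iG⁻¹(s)} − e^{is}|`, and `e^{i·}` is `1`-Lipschitz, so it suffices to bound
`|G⁻¹(s) − s|`. Writing `t = G⁻¹(s)`, which lies in `[0,2π]` because `G⁻¹` is a continuous
injection fixing both endpoints, `t − s = t − G(t) = ∫₀ᵗ (1 − g)`, of absolute value at most
`2π · sup |1 − g|`.
-/

open Real intervalIntegral Set

theorem Complex.norm_exp_I_mul_ofReal_sub_le (a b : ℝ) :
    ‖exp (I * a) - exp (I * b)‖ ≤ |a - b| := by
  have hsplit : exp (I * a) - exp (I * b) = exp (I * b) * (exp (I * ↑(a - b)) - 1) := by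
    rw [mul_sub, ← exp_add]; push_cast; ring_nf
  rw [hsplit, norm_mul, norm_exp_I_mul_ofReal, one_mul]
  exact Real.norm_exp_I_mul_ofReal_sub_one_le

theorem ContinuousOn.le_ciSup_Icc {f : ℝ → ℝ} {a b s : ℝ} (hf : ContinuousOn f (Icc a b))
    (hs : s ∈ Icc a b) : f s ≤ ⨆ t : Icc a b, f t := by
  have hbdd := isCompact_Icc.bddAbove_image hf
  rw [image_eq_range] at hbdd
  exact le_ciSup hbdd ⟨s, hs⟩

theorem ContinuousOn.mapsTo_Icc_of_injOn {f : ℝ → ℝ} {a b : ℝ} (hab : a ≤ b)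
    (hf : ContinuousOn f (Icc a b)) (hinj : InjOn f (Icc a b)) (ha : f a = a) (hb : f b = b) :
    MapsTo f (Icc a b) (Icc a b) := by
  have hmono :=
    (ContinuousOn.strictMonoOn_of_injOn_Icc hab (by rwa [ha, hb]) hf hinj).monotoneOn
  intro s hs
  constructor
  · simpa [ha] using hmono (left_mem_Icc.2 hab) hs hs.1
  · simpa [hb] using hmono hs (right_mem_Icc.2 hab) hs.2

theorem abs_sub_integral_le_of_abs_one_sub_le {g : ℝ → ℝ} {L C t : ℝ}
    (hg : ContinuousOn g (Icc 0 L)) (hC : ∀ u ∈ Icc 0 L, |1 - g u| ≤ C) (ht : t ∈ Icc 0 L) :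
    |t - ∫ u in (0:ℝ)..t, g u| ≤ L * C := by
  have hsub : uIcc 0 t ⊆ Icc 0 L := by
    rw [uIcc_of_le ht.1]; exact Icc_subset_Icc le_rfl ht.2
  have hC0 : 0 ≤ C := (abs_nonneg _).trans (hC 0 (left_mem_Icc.2 (ht.1.trans ht.2)))
  have hdefect : t - ∫ u in (0:ℝ)..t, g u = ∫ u in (0:ℝ)..t, (1 - g u) := by
    rw [integral_sub intervalIntegrable_const ((hg.mono hsub).intervalIntegrable)]
    simp
  have hbound : ‖∫ u in (0:ℝ)..t, (1 - g u)‖ ≤ C * |t - 0| := by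
    refine norm_integral_le_of_norm_le_const fun u hu => ?_
    rw [uIoc_of_le ht.1] at hu
    exact hC u ⟨hu.1.le, hu.2.trans ht.2⟩
  calc |t - ∫ u in (0:ℝ)..t, g u| = ‖∫ u in (0:ℝ)..t, (1 - g u)‖ := by
        rw [hdefect, Real.norm_eq_abs]
    _ ≤ C * |t - 0| := hbound
    _ ≤ L * C := by
        rw [sub_zero, abs_of_nonneg ht.1, mul_comm]
        exact mul_le_mul_of_nonneg_right ht.2 hC0

theorem IsSelfAdjoint.norm_cfc_sub_le {A : Type*} [CStarAlgebra A] {a : A}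
    (ha : IsSelfAdjoint a) {f h : ℂ → ℂ} (hf : Continuous f) (hh : Continuous h) {c : ℝ}
    (hc : 0 ≤ c) (hbound : ∀ s ∈ spectrum ℝ a, ‖f s - h s‖ ≤ c) :
    ‖cfc f a - cfc h a‖ ≤ c := by
  rw [← cfc_sub f h a hf.continuousOn hh.continuousOn]
  refine norm_cfc_le hc fun z hz => ?_
  rw [← ha.spectrumRestricts.algebraMap_image] at hz
  obtain ⟨s, hs, rfl⟩ := hz
  exact hbound s hs

theorem stmt_12_general {𝒜 : Type*}
    [CStarAlgebra 𝒜]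
    (g : ℝ → ℝ) (hg_cont : ContinuousOn g (Set.Icc 0 (2 * π)))
    (hg_int : (∫ u in (0:ℝ)..(2 * π), g u) = 2 * π)
    (Ginv : ℝ → ℝ) (hGinv_cont : Continuous Ginv)
    (hGinv_left : ∀ s ∈ Set.Icc (0:ℝ) (2 * π), (∫ u in (0:ℝ)..(Ginv s), g u) = s)
    (hGinv_right : ∀ s ∈ Set.Icc (0:ℝ) (2 * π), Ginv (∫ u in (0:ℝ)..s, g u) = s)
    (x : 𝒜) (hx : IsSelfAdjoint x)
    (hspec : spectrum ℝ x = Set.Icc 0 (2 * π)) :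
    ‖cfc (p := IsStarNormal) (fun z : ℂ => Complex.exp (Complex.I * (Ginv z.re : ℂ))) x
        - cfc (p := IsStarNormal) (fun z : ℂ => Complex.exp (Complex.I * z)) x‖
      ≤ 2 * π * ⨆ s : Set.Icc (0:ℝ) (2 * π), |1 - g s| := by
  have hπ : (0:ℝ) ≤ 2 * π := by positivity
  have hsup : ∀ s ∈ Icc (0:ℝ) (2 * π), |1 - g s| ≤ ⨆ s : Icc (0:ℝ) (2 * π), |1 - g s| :=
    fun s hs => ((continuousOn_const.sub hg_cont).abs).le_ciSup_Icc hs
  have hGinv_mapsTo : MapsTo Ginv (Icc 0 (2 * π)) (Icc 0 (2 * π)) := by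
    refine hGinv_cont.continuousOn.mapsTo_Icc_of_injOn hπ
      (LeftInvOn.injOn (f₁' := fun t => ∫ u in (0:ℝ)..t, g u) hGinv_left) ?_ ?_
    · simpa using hGinv_right 0 (left_mem_Icc.2 hπ)
    · simpa [hg_int] using hGinv_right (2 * π) (right_mem_Icc.2 hπ)
  refine hx.norm_cfc_sub_le (by fun_prop) (by fun_prop)
    (mul_nonneg hπ (Real.iSup_nonneg fun _ => abs_nonneg _)) fun s hs => ?_
  rw [hspec] at hs
  calc ‖Complex.exp (Complex.I * (Ginv (algebraMap ℝ ℂ s).re : ℂ))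
        - Complex.exp (Complex.I * algebraMap ℝ ℂ s)‖
      ≤ |Ginv s - s| := by simpa using Complex.norm_exp_I_mul_ofReal_sub_le (Ginv s) s
    _ = |Ginv s - ∫ u in (0:ℝ)..(Ginv s), g u| := by rw [hGinv_left s hs]
    _ ≤ 2 * π * ⨆ s : Icc (0:ℝ) (2 * π), |1 - g s| :=
        abs_sub_integral_le_of_abs_one_sub_le hg_cont hsup (hGinv_mapsTo hs)

/-- For a positive density `g` on `[0,2π]` of total mass `2π`, with `G(s) = ∫₀ˢ g` and
`Ginv = G⁻¹`, and a self-adjoint operator `x` with spectrum `[0,2π]` (e.g. one whose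
distribution is the uniform measure on `[0,2π]`), the unitaries `u_t = e^{iG⁻¹(x)}` and
`u = e^{ix}` satisfy `‖u_t − u‖ ≤ 2π · sup_{s∈[0,2π]} |1 − g(s)|`. -/
theorem stmt_12 {𝒜 : Type*}
    [CStarAlgebra 𝒜]
    (g : ℝ → ℝ) (hg_cont : ContinuousOn g (Set.Icc 0 (2 * π)))
    (hg_pos : ∀ s ∈ Set.Icc (0:ℝ) (2 * π), 0 < g s)
    (hg_int : (∫ u in (0:ℝ)..(2 * π), g u) = 2 * π)
    (Ginv : ℝ → ℝ) (hGinv_cont : Continuous Ginv)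
    (hGinv_left : ∀ s ∈ Set.Icc (0:ℝ) (2 * π), (∫ u in (0:ℝ)..(Ginv s), g u) = s)
    (hGinv_right : ∀ s ∈ Set.Icc (0:ℝ) (2 * π), Ginv (∫ u in (0:ℝ)..s, g u) = s)
    (x : 𝒜) (hx : IsSelfAdjoint x)
    (hspec : spectrum ℝ x = Set.Icc 0 (2 * π)) :
    ‖cfc (p := IsStarNormal) (fun z : ℂ => Complex.exp (Complex.I * (Ginv z.re : ℂ))) x
        - cfc (p := IsStarNormal) (fun z : ℂ => Complex.exp (Complex.I * z)) x‖
      ≤ 2 * π * ⨆ s : Set.Icc (0:ℝ) (2 * π), |1 - g s| :=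
  stmt_12_general g hg_cont hg_int Ginv hGinv_cont hGinv_left hGinv_right x hx hspec
end
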